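/- (Theorem 2: the Linear Extension Operator satisfies the Acceleration Conditions.) Let v ∈ V and set u = Tv. Let α* ∈ ℝ be an optimal solution of the problem min { Σ_{i∈S} v_i + α Σ_{i∈S} (u_i − v_i) : T(v + α(u − v)) ≤ v + α(u − v) }, i.e., w := v + α*(u − v) satisfies Tw ≤ w, and Σ_i v_i + α* Σ_i (u_i − v_i) ≤ Σ_i v_i + α Σ_i (u_i − v_i) for every α ∈ ℝ with T(v + α(u − v)) ≤ v + α(u − v). Then Zv := w satisfies Zv ∈ V (condition (A)) and Zv ≤ v componentwise (condition (B)). Moreover, the problem is feasible: α = 1 satisfies T(v + 1·(u − v)) ≤ v + 1·(u − v). -/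
import Mathlib


noncomputable def Tval {S : Type*} [Fintype S] {A : S → Type*}
    [∀ i, Fintype (A i)] [∀ i, Nonempty (A i)]
    (r : ∀ i, A i → ℝ) (p : ∀ i, A i → S → ℝ) (lam : ℝ) (v : S → ℝ) (i : S) : ℝ :=
  Finset.univ.sup' Finset.univ_nonempty fun a : A i =>
    r i a + lam * ∑ j, p i a j * v j


theorem Tval_mono {S : Type*} [Fintype S] {A : S → Type*}
    [∀ i, Fintype (A i)] [∀ i, Nonempty (A i)]
    (r : ∀ i, A i → ℝ) (p : ∀ i, A i → S → ℝ) (lam : ℝ)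
    (hp : ∀ i (a : A i) (j : S), 0 ≤ p i a j) (hlam0 : 0 ≤ lam)
    (v w : S → ℝ) (hvw : ∀ j, v j ≤ w j) (i : S) :
    Tval r p lam v i ≤ Tval r p lam w i := by
  unfold Tval
  apply Finset.sup'_le
  intro a _
  refine le_trans ?_ (Finset.le_sup' _ (Finset.mem_univ a))
  gcongr with j
  · exact hp i a j
  · exact hvw j

theorem linear_extension_operator_acceleration {S : Type*} [Fintype S] [Nonempty S] {A : S → Type*}
    [∀ i, Fintype (A i)] [∀ i, Nonempty (A i)]
    (r : ∀ i, A i → ℝ) (p : ∀ i, A i → S → ℝ) (lam : ℝ)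
    (hp : ∀ i (a : A i) (j : S), 0 ≤ p i a j)
    (hp1 : ∀ i (a : A i), ∑ j, p i a j = 1)
    (hlam0 : 0 ≤ lam) (hlam1 : lam < 1)
    (v : S → ℝ) (hv : ∀ i, Tval r p lam v i ≤ v i)
    (astar : ℝ)
    (hfeas : ∀ i, Tval r p lam (fun j => v j + astar * (Tval r p lam v j - v j)) i ≤
      v i + astar * (Tval r p lam v i - v i))
    (hopt : ∀ a : ℝ,
      (∀ i, Tval r p lam (fun j => v j + a * (Tval r p lam v j - v j)) i ≤
        v i + a * (Tval r p lam v i - v i)) →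
      (∑ i, v i) + astar * ∑ i, (Tval r p lam v i - v i) ≤
        (∑ i, v i) + a * ∑ i, (Tval r p lam v i - v i)) :
    ((∀ i, Tval r p lam (fun j => v j + astar * (Tval r p lam v j - v j)) i ≤
        v i + astar * (Tval r p lam v i - v i)) ∧
      (∀ i, v i + astar * (Tval r p lam v i - v i) ≤ v i)) ∧
    (∀ i, Tval r p lam (fun j => v j + (1 : ℝ) * (Tval r p lam v j - v j)) i ≤
      v i + (1 : ℝ) * (Tval r p lam v i - v i)) := by
  have hfeas1 : ∀ i, Tval r p lam (fun j => v j + (1 : ℝ) * (Tval r p lam v j - v j)) i ≤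
      v i + (1 : ℝ) * (Tval r p lam v i - v i) := by
    intro i
    have h1 : (fun j => v j + (1 : ℝ) * (Tval r p lam v j - v j)) = fun j => Tval r p lam v j := by
      funext j; ring
    rw [h1]
    have := Tval_mono r p lam hp hlam0 _ v hv i
    linarith
  refine ⟨⟨hfeas, ?_⟩, hfeas1⟩
  intro i
  have hD : astar * ∑ i, (Tval r p lam v i - v i) ≤ 0 := by
    have h0 := hopt 0 (by
      intro i
      have h1 : (fun j => v j + (0 : ℝ) * (Tval r p lam v j - v j)) = v := by
        funext j; ring
      rw [h1]; linarith [hv i])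
    linarith
  rcases eq_or_lt_of_le (sub_nonpos.mpr (hv i)) with h | h
  · rw [h, mul_zero, add_zero]
  · have hsum : ∑ j, (Tval r p lam v j - v j) < 0 := by
      have hlt : ∑ j, (Tval r p lam v j - v j) < ∑ _j : S, (0 : ℝ) :=
        Finset.sum_lt_sum (fun j _ => sub_nonpos.mpr (hv j)) ⟨i, Finset.mem_univ i, h⟩
      simpa using hlt
    have ha : 0 ≤ astar := by nlinarith
    nlinarith [hv i]
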